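/- Let p be an integer-valued supermodular set-function on the subsets of a nonempty finite set S with p(∅) = 0, and assume Ḃ(p) is nonempty. Let m be a β₁-covered element of Ḃ(p). Then m is pre-dec-min if and only if m(s) ≥ β₁ − 1 for every s ∈ S₁(m). -/

import Mathlib

/-!
For `m ∈ Ḃ(p)` the `m`-tight sets are closed under `∩` and `∪` by supermodularity, and `∅`, `S`
are tight; so there is a smallest tight set `S₁(m)` containing the `β₁`-valued elements and, for
each `s`, a largest tight set avoiding `s`.

If some `s ∈ S₁(m)` had `m(s) ≤ β₁ - 2`, the largest tight set avoiding `s` would miss a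
`β₁`-valued `t`, so every tight set containing `t` contains `s` and `m + χ_s - χ_t` stays in
`Ḃ(p)`, is still `β₁`-covered, and has one fewer `β₁`-valued component.

Conversely, if `m ≥ β₁ - 1` on `I = S₁(m)`, then `m̃(I) = (β₁ - 1)|I| + #{m = β₁}`, while any
`β₁`-covered `m'` has `m̃'(I) ≤ (β₁ - 1)|I| + #{v ∈ I | m'(v) = β₁}`; and `m̃'(I) ≥ p(I) = m̃(I)`.
-/

open Finset

variable {α : Type*}

/-- Integer-valued supermodular set-function. -/
def Supermodular [DecidableEq α] (p : Finset α → ℤ) : Prop :=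
  ∀ X Y : Finset α, p X + p Y ≤ p (X ∩ Y) + p (X ∪ Y)

/-- The M-convex set `Ḃ(p)` of integral elements of the base-polyhedron `B'(p)`:
all `m : α → ℤ` with `m̃(X) ≥ p(X)` for every `X` and `m̃(S) = p(S)`. -/
def Bdot [Fintype α] (p : Finset α → ℤ) : Set (α → ℤ) :=
  {m | (∀ X : Finset α, p X ≤ ∑ s ∈ X, m s) ∧ (∑ s, m s) = p Finset.univ}

/-- `x↓`: the values of `x` arranged in nonincreasing order. -/
def sortedDesc [Fintype α] (x : α → ℤ) : List ℤ :=
  ((Finset.univ.val.map x).sort (· ≤ ·)).reverse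

/-- `x↑`: the values of `x` arranged in nondecreasing order. -/
def sortedAsc [Fintype α] (x : α → ℤ) : List ℤ :=
  (Finset.univ.val.map x).sort (· ≤ ·)

/-- `x ≤_dec y`: `x↓` is lexicographically less than or equal to `y↓`. -/
def DecLE [Fintype α] (x y : α → ℤ) : Prop :=
  sortedDesc x = sortedDesc y ∨ List.Lex (· < ·) (sortedDesc x) (sortedDesc y)

/-- `x ≤_inc y`: `x↑` is lexicographically less than or equal to `y↑`. -/
def IncLE [Fintype α] (x y : α → ℤ) : Prop :=
  sortedAsc x = sortedAsc y ∨ List.Lex (· < ·) (sortedAsc x) (sortedAsc y)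

/-- `m` is a decreasingly minimal element of `Bdot p`. -/
def DecMin [Fintype α] (p : Finset α → ℤ) (m : α → ℤ) : Prop :=
  m ∈ Bdot p ∧ ∀ y ∈ Bdot p, DecLE m y

/-- `m` is `β`-covered: every component is at most `β`. -/
def IsCovered [Fintype α] (β : ℤ) (m : α → ℤ) : Prop := ∀ s : α, m s ≤ β

/-- `m` is a pre-dec-min element of `Ḃ(p)` (with respect to the bound `β`):
it is a `β`-covered element of `Ḃ(p)` with a minimum number of `β`-valued
components among all `β`-covered elements of `Ḃ(p)`. -/
def PreDecMin [Fintype α] [DecidableEq α] (p : Finset α → ℤ) (β : ℤ) (m : α → ℤ) : Prop :=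
  m ∈ Bdot p ∧ IsCovered β m ∧
    ∀ m' ∈ Bdot p, IsCovered β m' →
      (Finset.univ.filter (fun s => m s = β)).card ≤
        (Finset.univ.filter (fun s => m' s = β)).card

/-- `S₁(m)`: the intersection of all `m`-tight sets containing every `β`-valued element. -/
def S1m [Fintype α] (p : Finset α → ℤ) (β : ℤ) (m : α → ℤ) : Set α :=
  {s | ∀ X : Finset α, (∑ v ∈ X, m v = p X) → (∀ t : α, m t = β → t ∈ X) → s ∈ X}

def IsTight (p : Finset α → ℤ) (m : α → ℤ) (X : Finset α) : Prop :=
  ∑ v ∈ X, m v = p X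

section Tight

variable [DecidableEq α] {p : Finset α → ℤ} {m : α → ℤ}

lemma IsTight.inter_and_union (hp : Supermodular p) (hm : ∀ X, p X ≤ ∑ v ∈ X, m v)
    {X Y : Finset α} (hX : IsTight p m X) (hY : IsTight p m Y) :
    IsTight p m (X ∩ Y) ∧ IsTight p m (X ∪ Y) := by
  have := hm (X ∩ Y)
  have := hm (X ∪ Y)
  have := hp X Y
  have : ∑ v ∈ X ∪ Y, m v + ∑ v ∈ X ∩ Y, m v = ∑ v ∈ X, m v + ∑ v ∈ Y, m v := sum_union_inter
  unfold IsTight at *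
  constructor <;> linarith

variable [Fintype α]

lemma exists_isTight_minimal_superset (hp : Supermodular p) (hm : m ∈ Bdot p) (A : Finset α) :
    ∃ I, IsTight p m I ∧ A ⊆ I ∧ ∀ X, IsTight p m X → A ⊆ X → I ⊆ X := by
  classical
  let 𝒳 : Finset (Finset α) := {X | IsTight p m X ∧ A ⊆ X}
  refine ⟨𝒳.inf id, ?_, ?_, fun X hX hAX => Finset.inf_le (mem_filter.2 ⟨mem_univ X, hX, hAX⟩)⟩
  · refine inf_induction (by rw [top_eq_univ]; exact hm.2) (fun X hX Y hY => (hX.inter_and_union hp hm.1 hY).1)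
      fun X hX => (mem_filter.1 hX).2.1
  · exact Finset.le_inf fun X hX => (mem_filter.1 hX).2.2

lemma exists_isTight_maximal_not_mem (hp : Supermodular p) (h0 : p ∅ = 0)
    (hm : ∀ X, p X ≤ ∑ v ∈ X, m v) (s : α) :
    ∃ U, IsTight p m U ∧ s ∉ U ∧ ∀ X, IsTight p m X → s ∉ X → X ⊆ U := by
  classical
  let 𝒳 : Finset (Finset α) := {X | IsTight p m X ∧ s ∉ X}
  refine ⟨𝒳.sup id, ?_, ?_, fun X hX hsX =>
    Finset.le_sup (f := id) (show X ∈ 𝒳 from mem_filter.2 ⟨mem_univ X, hX, hsX⟩)⟩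
  · refine sup_induction (by simp [IsTight, h0]) (fun X hX Y hY => (hX.inter_and_union hp hm hY).2)
      fun X hX => (mem_filter.1 hX).2.1
  · simp only [mem_sup, id, not_exists, not_and]
    exact fun X hX => (mem_filter.1 hX).2.2

lemma exists_forall_isTight_mem_of_mem_S1m (hp : Supermodular p) (h0 : p ∅ = 0)
    (hm : ∀ X, p X ≤ ∑ v ∈ X, m v) {β : ℤ} {s : α} (hs : s ∈ S1m p β m) :
    ∃ t, m t = β ∧ ∀ X, IsTight p m X → t ∈ X → s ∈ X := by
  obtain ⟨U, hU, hsU, hUmax⟩ := exists_isTight_maximal_not_mem hp h0 hm s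
  by_contra! h
  refine hsU (hs U hU fun t ht => ?_)
  obtain ⟨X, hX, htX, hsX⟩ := h t ht
  exact hUmax X hX hsX htX

end Tight

lemma add_single_sub_single_mem_Bdot [Fintype α] [DecidableEq α] {p : Finset α → ℤ}
    {m : α → ℤ} (hm : m ∈ Bdot p) {s t : α} (hst : ∀ X, IsTight p m X → t ∈ X → s ∈ X) :
    m + Pi.single s 1 - Pi.single t 1 ∈ Bdot p := by
  have hsum (X : Finset α) : ∑ v ∈ X, (m + Pi.single s 1 - Pi.single t 1 : α → ℤ) v =
      ∑ v ∈ X, m v + (if s ∈ X then 1 else 0) - (if t ∈ X then 1 else 0) := by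
    simp only [Pi.sub_apply, Pi.add_apply, sum_sub_distrib, sum_add_distrib, sum_pi_single']
  refine ⟨fun X => ?_, by rw [hsum, hm.2]; simp⟩
  rw [hsum]
  have hle := hm.1 X
  by_cases htX : t ∈ X
  · by_cases hsX : s ∈ X
    · simp [hsX, htX, hle]
    · have hlt : p X < ∑ v ∈ X, m v := hle.lt_of_ne fun h => hsX (hst X h.symm htX)
      simp only [hsX, htX, if_true, if_false]
      omega
  · simp only [htX, if_false]
    split_ifs <;> omega

section Counting

variable {I : Finset α} {x : α → ℤ} {β : ℤ}

lemma sub_one_mul_card_add_card_filter_eq :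
    (β - 1) * #I + #{v ∈ I | x v = β} = ∑ v ∈ I, ((β - 1) + if x v = β then 1 else 0) := by
  rw [sum_add_distrib, sum_const, sum_boole, nsmul_eq_mul, mul_comm]

lemma sum_le_sub_one_mul_card_add_card_filter_eq (hx : ∀ v ∈ I, x v ≤ β) :
    ∑ v ∈ I, x v ≤ (β - 1) * #I + #{v ∈ I | x v = β} := by
  rw [sub_one_mul_card_add_card_filter_eq]
  refine sum_le_sum fun v hv => ?_
  have := hx v hv
  split_ifs <;> omega

lemma sum_eq_sub_one_mul_card_add_card_filter_eq (hx : ∀ v ∈ I, x v ≤ β)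
    (hx' : ∀ v ∈ I, β - 1 ≤ x v) :
    ∑ v ∈ I, x v = (β - 1) * #I + #{v ∈ I | x v = β} := by
  rw [sub_one_mul_card_add_card_filter_eq]
  refine sum_congr rfl fun v hv => ?_
  have := hx v hv
  have := hx' v hv
  split_ifs <;> omega

end Counting

section PreDecMin

variable [Fintype α] [DecidableEq α] {p : Finset α → ℤ} {m : α → ℤ} {β : ℤ}

lemma PreDecMin.sub_one_le_of_mem_S1m (hp : Supermodular p) (h0 : p ∅ = 0)
    (hpre : PreDecMin p β m) {s : α} (hs : s ∈ S1m p β m) : β - 1 ≤ m s := by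
  obtain ⟨hm, hcov, hmin⟩ := hpre
  by_contra! hs_lt
  obtain ⟨t, htβ, hst⟩ := exists_forall_isTight_mem_of_mem_S1m hp h0 hm.1 hs
  have hts : t ≠ s := by rintro rfl; omega
  set m' := m + Pi.single s 1 - Pi.single t 1
  have hm'_apply (v : α) : m' v = m v + (if v = s then 1 else 0) - (if v = t then 1 else 0) := by
    simp [m', Pi.single_apply]
  have hcov' : IsCovered β m' := fun v => by
    have := hcov v
    rw [hm'_apply]
    split_ifs <;> subst_vars <;> omega
  have hfewer : ({v | m' v = β} : Finset α) ⊂ ({v | m v = β} : Finset α) := by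
    refine ssubset_iff_of_subset (fun v => ?_) |>.2 ⟨t, ?_, ?_⟩
    · have := hcov v
      simp only [mem_filter, mem_univ, true_and, hm'_apply]
      split_ifs <;> subst_vars <;> omega
    · simpa using htβ
    · simp [hm'_apply, hts, htβ]
  exact (card_lt_card hfewer).not_ge (hmin m' (add_single_sub_single_mem_Bdot hm hst) hcov')

lemma preDecMin_of_forall_mem_S1m (hp : Supermodular p) (hm : m ∈ Bdot p)
    (hcov : IsCovered β m) (hS1 : ∀ s ∈ S1m p β m, β - 1 ≤ m s) : PreDecMin p β m := by
  refine ⟨hm, hcov, fun m' hm' hcov' => ?_⟩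
  obtain ⟨I, hI, hTI, hImin⟩ := exists_isTight_minimal_superset hp hm ({v | m v = β} : Finset α)
  have hIS1 : ∀ v ∈ I, v ∈ S1m p β m := fun v hv X hX hTX =>
    hImin X hX (fun t ht => hTX t (mem_filter.1 ht).2) hv
  have hT : ({v ∈ I | m v = β} : Finset α) = ({v | m v = β} : Finset α) :=
    (filter_subset_filter _ (subset_univ I)).antisymm fun v hv =>
      mem_filter.2 ⟨hTI hv, (mem_filter.1 hv).2⟩
  have hcount : (#{v | m v = β} : ℤ) ≤ #{v ∈ I | m' v = β} := by
    have := sum_eq_sub_one_mul_card_add_card_filter_eq (fun v _ => hcov v)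
      (fun v hv => hS1 v (hIS1 v hv))
    have := sum_le_sub_one_mul_card_add_card_filter_eq (I := I) (fun v _ => hcov' v)
    have := hm'.1 I
    rw [hT] at *
    unfold IsTight at hI
    linarith
  exact (Nat.cast_le.1 hcount).trans (card_le_card (filter_subset_filter _ (subset_univ I)))

end PreDecMin

theorem stmt3_general [Fintype α] [DecidableEq α]
    (p : Finset α → ℤ) (hp : Supermodular p) (h0 : p ∅ = 0)
    (β₁ : ℤ)
    (m : α → ℤ) (hm : m ∈ Bdot p) (hcov : IsCovered β₁ m) :
    PreDecMin p β₁ m ↔ ∀ s ∈ S1m p β₁ m, β₁ - 1 ≤ m s :=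
  ⟨fun hpre _ hs => hpre.sub_one_le_of_mem_S1m hp h0 hs, preDecMin_of_forall_mem_S1m hp hm hcov⟩

/-- A `β₁`-covered element `m` of `Ḃ(p)` is pre-dec-min iff `m(s) ≥ β₁ − 1`
for every `s ∈ S₁(m)`. -/
theorem stmt3 [Fintype α] [DecidableEq α] [Nonempty α]
    (p : Finset α → ℤ) (hp : Supermodular p) (h0 : p ∅ = 0)
    (hne : (Bdot p).Nonempty) (β₁ : ℤ)
    (hβ : IsLeast {b : ℤ | ∃ m ∈ Bdot p, ∀ s : α, m s ≤ b} β₁)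
    (m : α → ℤ) (hm : m ∈ Bdot p) (hcov : IsCovered β₁ m) :
    PreDecMin p β₁ m ↔ ∀ s ∈ S1m p β₁ m, β₁ - 1 ≤ m s :=
  stmt3_general p hp h0 β₁ m hm hcov
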